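/- Case 3 of the main counting theorem: let m, n be positive integers and j a non-negative integer with m ≤ n and j < n. The number of weak homomorphisms f from P_m to P_n with f(0) = j such that the number of steps x with f(x+1) = f(x) − 1 is at most j − n + m and the number of steps x with f(x+1) = f(x) + 1 is at most n − j − 1 equals Σ_{t=0}^{j−n+m} Σ_{s=0}^{n−j−1} binom(m−1; s, t, m−1−s−t), where sums whose upper limit is below their lower limit are 0. -/

import Mathlib

/-- The multinomial coefficient `binom(n; a, b, c)`, with integer arguments: it equals
`n! / (a! b! c!)` when `a, b, c` are non-negative and `a + b + c = n`, and is `0`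
otherwise. -/
def multi3 (n a b c : ℤ) : ℕ :=
  if 0 ≤ a ∧ 0 ≤ b ∧ 0 ≤ c ∧ a + b + c = n then
    Nat.factorial n.toNat / (Nat.factorial a.toNat * Nat.factorial b.toNat * Nat.factorial c.toNat)
  else 0

/-- `f : Fin m → ℕ` is a weak homomorphism from the path `P_m` to the path `P_n`. -/
def IsPathWHom (m n : ℕ) (f : Fin m → ℕ) : Prop :=
  (∀ x, f x < n) ∧
  ∀ (x : ℕ) (h : x + 1 < m),
    f ⟨x + 1, h⟩ = f ⟨x, Nat.lt_of_succ_lt h⟩ ∨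
    f ⟨x + 1, h⟩ = f ⟨x, Nat.lt_of_succ_lt h⟩ + 1 ∨
    f ⟨x, Nat.lt_of_succ_lt h⟩ = f ⟨x + 1, h⟩ + 1

/-- The number of steps `x` with `f(x+1) = f(x) − 1`. -/
noncomputable def downSteps (m : ℕ) (f : Fin m → ℕ) : ℕ :=
  Nat.card {x : ℕ // ∃ h : x + 1 < m, f ⟨x, Nat.lt_of_succ_lt h⟩ = f ⟨x + 1, h⟩ + 1}

/-- The number of steps `x` with `f(x+1) = f(x) + 1`. -/
noncomputable def upSteps (m : ℕ) (f : Fin m → ℕ) : ℕ :=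
  Nat.card {x : ℕ // ∃ h : x + 1 < m, f ⟨x + 1, h⟩ = f ⟨x, Nat.lt_of_succ_lt h⟩ + 1}

/-!
A weak homomorphism `f : P_m → P_n` with `f(0) = j` is determined by its sequence of `m − 1`
steps in `{0, +1, −1}`. Conversely, a step sequence with at most `a ≤ j` down-steps and at most
`b ≤ n − j − 1` up-steps traces a walk from `j` that never leaves `{0, …, n − 1}`. So for
`a = j − n + m` and `b = n − j − 1` the count is the number of step sequences with at most `a`
down-steps and at most `b` up-steps, and those with `s` up-steps and `t` down-steps number
`C(m−1, s) · C(m−1−s, t) = binom(m−1; s, t, m−1−s−t)`.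
-/
open Finset

namespace Fin

variable {M : Type*} [AddCommMonoid M] [PartialOrder M] [IsOrderedAddMonoid M] {n : ℕ}

theorem partialSum_mono {f g : Fin n → M} (hfg : ∀ i, f i ≤ g i) (k : Fin (n + 1)) :
    partialSum f k ≤ partialSum g k := by
  simp only [partialSum, List.ofFn_eq_map, ← List.map_take]
  exact List.sum_le_sum fun i _ => hfg i

theorem partialSum_le_sum {f g : Fin n → M} (hfg : ∀ i, f i ≤ g i) (hg : ∀ i, 0 ≤ g i)
    (k : Fin (n + 1)) :
    partialSum f k ≤ ∑ i, g i :=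
  calc partialSum f k ≤ partialSum g k := partialSum_mono hfg k
    _ ≤ (List.ofFn g).sum := (List.take_sublist _ _).sum_le_sum (by simpa using hg)
    _ = ∑ i, g i := sum_ofFn g

theorem sum_le_partialSum {f g : Fin n → M} (hgf : ∀ i, g i ≤ f i) (hg : ∀ i, g i ≤ 0)
    (k : Fin (n + 1)) :
    ∑ i, g i ≤ partialSum f k :=
  partialSum_le_sum (M := Mᵒᵈ) (f := f) (g := g) hgf hg k

end Fin

theorem sum_Icc_zero_natCast {M : Type*} [AddCommMonoid M] (a : ℕ) (g : ℤ → M) :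
    ∑ x ∈ Icc (0 : ℤ) a, g x = ∑ k ∈ range (a + 1), g k := by
  rw [Int.Icc_eq_finset_map, sum_map]
  simp

theorem multi3_natCast (N s t : ℕ) :
    multi3 N s t (N - s - t) = N.choose s * (N - s).choose t := by
  by_cases hst : s + t ≤ N
  · have hfac : N.factorial = N.choose s * (N - s).choose t *
        (s.factorial * t.factorial * (N - s - t).factorial) := by
      rw [← Nat.choose_mul_factorial_mul_factorial (show s ≤ N by omega),
        ← Nat.choose_mul_factorial_mul_factorial (show t ≤ N - s by omega)]
      ring
    rw [multi3, if_pos (by omega), show ((N : ℤ) - s - t).toNat = N - s - t by omega]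
    simp only [Int.toNat_natCast]
    rw [hfac, Nat.mul_div_cancel _ (by positivity)]
  · rw [multi3, if_neg (by omega)]
    rcases Nat.lt_or_ge N s with hs | hs
    · simp [Nat.choose_eq_zero_of_lt hs]
    · simp [Nat.choose_eq_zero_of_lt (show N - s < t by omega)]

section SignCounting

variable {α : Type*} [Fintype α] [DecidableEq α]

theorem card_signs_eq_choose_mul_choose (s t : ℕ) :
    #{σ : α → SignType | #{i | σ i = 1} = s ∧ #{i | σ i = -1} = t} =
      (Fintype.card α).choose s * (Fintype.card α - s).choose t := by
  let ofSets (p : (_ : Finset α) × Finset α) (i : α) : SignType :=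
    if i ∈ p.1 then 1 else if i ∈ p.2 then -1 else 0
  have hofSets : ∀ p : (_ : Finset α) × Finset α, Disjoint p.1 p.2 →
      ({i | ofSets p i = 1} : Finset α) = p.1 ∧ ({i | ofSets p i = -1} : Finset α) = p.2 := by
    intro p hp
    have := disjoint_left.1 hp
    constructor <;> ext i <;> simp only [mem_filter, mem_univ, true_and, ofSets] <;>
      split_ifs <;> simp_all
  calc _ = #((univ.powersetCard s).sigma fun U => Uᶜ.powersetCard t) := by
        refine card_bij' (fun σ _ => ⟨({i | σ i = 1} : Finset α), ({i | σ i = -1} : Finset α)⟩)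
          (fun p _ => ofSets p) ?_ ?_ ?_ ?_
        · intro σ hσ
          simp only [mem_filter, mem_univ, true_and] at hσ
          simp only [mem_sigma, mem_powersetCard]
          refine ⟨⟨subset_univ _, hσ.1⟩, fun i hi => ?_, hσ.2⟩
          simp_all
        · intro p hp
          simp only [mem_sigma, mem_powersetCard, subset_compl_iff_disjoint_left] at hp
          obtain ⟨h₁, h₂⟩ := hofSets p hp.2.1
          simp only [mem_filter, mem_univ, true_and, h₁, h₂]
          exact ⟨hp.1.2, hp.2.2⟩
        · intro σ _
          funext i
          cases h : σ i <;> simp [ofSets, h]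
        · intro p hp
          simp only [mem_sigma, mem_powersetCard, subset_compl_iff_disjoint_left] at hp
          obtain ⟨h₁, h₂⟩ := hofSets p hp.2.1
          rw [h₁, h₂]
    _ = _ := by
        rw [card_sigma, sum_const_nat fun U hU => by
          rw [card_powersetCard, card_compl, (mem_powersetCard.1 hU).2]]
        rw [card_powersetCard, card_univ]

theorem card_signs_le_eq_sum (a b : ℕ) :
    #{σ : α → SignType | #{i | σ i = -1} ≤ a ∧ #{i | σ i = 1} ≤ b} =
      ∑ t ∈ range (a + 1), ∑ s ∈ range (b + 1),
        (Fintype.card α).choose s * (Fintype.card α - s).choose t := by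
  rw [card_eq_sum_card_fiberwise (f := fun σ : α → SignType => (#{i | σ i = -1}, #{i | σ i = 1}))
    (t := range (a + 1) ×ˢ range (b + 1)) fun σ hσ => by simp_all, sum_product]
  refine sum_congr rfl fun t ht => sum_congr rfl fun s hs => ?_
  rw [← card_signs_eq_choose_mul_choose]
  congr 1
  ext σ
  simp only [mem_range] at ht hs
  simp only [mem_filter, mem_univ, true_and, Prod.mk.injEq]
  omega

end SignCounting

section Walks

variable {N n j : ℕ}

theorem natCard_steps_eq_card (Q : Fin N → Prop) [DecidablePred Q] :
    Nat.card {x : ℕ // ∃ h : x + 1 < N + 1, Q ⟨x, Nat.lt_of_succ_lt_succ h⟩} = #{i | Q i} := by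
  let e : {x : ℕ // ∃ h : x + 1 < N + 1, Q ⟨x, Nat.lt_of_succ_lt_succ h⟩} ≃ {i // Q i} :=
    { toFun := fun x => ⟨⟨x.1, by obtain ⟨h, -⟩ := x.2; omega⟩, x.2.2⟩
      invFun := fun i => ⟨i.1, by omega, i.2⟩
      left_inv := fun _ => rfl
      right_inv := fun _ => rfl }
  rw [Nat.card_congr e, Nat.card_eq_fintype_card, Fintype.card_subtype]

theorem downSteps_eq_card (f : Fin (N + 1) → ℕ) :
    downSteps (N + 1) f = #{i : Fin N | f i.castSucc = f i.succ + 1} :=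
  natCard_steps_eq_card fun i => f i.castSucc = f i.succ + 1

theorem upSteps_eq_card (f : Fin (N + 1) → ℕ) :
    upSteps (N + 1) f = #{i : Fin N | f i.succ = f i.castSucc + 1} :=
  natCard_steps_eq_card fun i => f i.succ = f i.castSucc + 1

noncomputable def stepSigns (f : Fin (N + 1) → ℕ) (i : Fin N) : SignType :=
  SignType.sign ((f i.succ : ℤ) - f i.castSucc)

theorem coe_stepSigns {f : Fin (N + 1) → ℕ} (hf : IsPathWHom (N + 1) n f) (i : Fin N) :
    (stepSigns f i : ℤ) = f i.succ - f i.castSucc := by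
  have hstep : f i.succ = f i.castSucc ∨ f i.succ = f i.castSucc + 1 ∨
      f i.castSucc = f i.succ + 1 := hf.2 i i.succ.2
  unfold stepSigns
  rcases hstep with h | h | h <;> simp [h]

theorem stepSigns_eq_one_iff {f : Fin (N + 1) → ℕ} (hf : IsPathWHom (N + 1) n f) (i : Fin N) :
    stepSigns f i = 1 ↔ f i.succ = f i.castSucc + 1 := by
  have h := coe_stepSigns hf i
  generalize stepSigns f i = s at h
  cases s <;> simp at h ⊢ <;> omega

theorem stepSigns_eq_neg_one_iff {f : Fin (N + 1) → ℕ} (hf : IsPathWHom (N + 1) n f)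
    (i : Fin N) : stepSigns f i = -1 ↔ f i.castSucc = f i.succ + 1 := by
  have h := coe_stepSigns hf i
  generalize stepSigns f i = s at h
  cases s <;> simp at h ⊢ <;> omega

def walk (j : ℕ) (σ : Fin N → SignType) (k : Fin (N + 1)) : ℤ :=
  j + Fin.partialSum (fun i => (σ i : ℤ)) k

theorem walk_zero (σ : Fin N → SignType) : walk j σ 0 = j := by
  simp [walk]

theorem walk_succ (σ : Fin N → SignType) (i : Fin N) :
    walk j σ i.succ = walk j σ i.castSucc + σ i := by
  rw [walk, walk, Fin.partialSum_succ, add_assoc]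

theorem sub_card_le_walk (σ : Fin N → SignType) (k : Fin (N + 1)) :
    (j : ℤ) - #{i | σ i = -1} ≤ walk j σ k := by
  have h := Fin.sum_le_partialSum (f := fun i => (σ i : ℤ))
    (g := fun i => -if σ i = -1 then 1 else 0) (fun i => by cases σ i <;> simp) (fun i => by
      split_ifs <;> simp) k
  simp only [sum_neg_distrib, sum_boole] at h
  rw [walk]
  omega

theorem walk_le_add_card (σ : Fin N → SignType) (k : Fin (N + 1)) :
    walk j σ k ≤ j + #{i | σ i = 1} := by
  have h := Fin.partialSum_le_sum (f := fun i => (σ i : ℤ))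
    (g := fun i => if σ i = 1 then 1 else 0) (fun i => by cases σ i <;> simp) (fun i => by
      split_ifs <;> simp) k
  simp only [sum_boole] at h
  rw [walk]
  omega

theorem walk_stepSigns {f : Fin (N + 1) → ℕ} (hf : IsPathWHom (N + 1) n f) (h0 : f 0 = j)
    (k : Fin (N + 1)) : walk j (stepSigns f) k = f k := by
  induction k using Fin.induction with
  | zero => rw [walk_zero, h0]
  | succ i ih => rw [walk_succ, ih, coe_stepSigns hf]; ring

theorem stepSigns_toNat_walk {σ : Fin N → SignType} (hpos : ∀ k, 0 ≤ walk j σ k) :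
    stepSigns (fun k => (walk j σ k).toNat) = σ := by
  funext i
  have h := walk_succ (j := j) σ i
  rw [stepSigns, Int.toNat_of_nonneg (hpos _), Int.toNat_of_nonneg (hpos _), h,
    add_sub_cancel_left]
  cases σ i <;> simp

theorem isPathWHom_toNat_walk {σ : Fin N → SignType} (hpos : ∀ k, 0 ≤ walk j σ k)
    (hlt : ∀ k, walk j σ k < n) : IsPathWHom (N + 1) n (fun k => (walk j σ k).toNat) := by
  refine ⟨fun k => (Int.toNat_lt (hpos k)).2 (hlt k), fun x hx => ?_⟩
  have h := walk_succ (j := j) σ ⟨x, by omega⟩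
  have h₁ := hpos ⟨x, by omega⟩
  have h₂ := hpos ⟨x + 1, hx⟩
  simp only [Fin.succ_mk, Fin.castSucc_mk] at h
  beta_reduce
  generalize σ ⟨x, _⟩ = s at h
  cases s <;> simp at h <;> omega

theorem downSteps_eq_card_stepSigns {f : Fin (N + 1) → ℕ} (hf : IsPathWHom (N + 1) n f) :
    downSteps (N + 1) f = #{i | stepSigns f i = -1} := by
  simp only [downSteps_eq_card, stepSigns_eq_neg_one_iff hf]

theorem upSteps_eq_card_stepSigns {f : Fin (N + 1) → ℕ} (hf : IsPathWHom (N + 1) n f) :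
    upSteps (N + 1) f = #{i | stepSigns f i = 1} := by
  simp only [upSteps_eq_card, stepSigns_eq_one_iff hf]

theorem card_pathWHom_eq_card_signs {a b : ℕ} (ha : a ≤ j) (hb : j + b < n) :
    Nat.card {f : Fin (N + 1) → ℕ // IsPathWHom (N + 1) n f ∧ (∀ h : 0 < N + 1, f ⟨0, h⟩ = j) ∧
        downSteps (N + 1) f ≤ a ∧ upSteps (N + 1) f ≤ b} =
      #{σ : Fin N → SignType | #{i | σ i = -1} ≤ a ∧ #{i | σ i = 1} ≤ b} := by
  have hpos (σ : Fin N → SignType) (hσ : #{i | σ i = -1} ≤ a) (k) : 0 ≤ walk j σ k := by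
    have := sub_card_le_walk (j := j) σ k
    omega
  have hlt (σ : Fin N → SignType) (hσ : #{i | σ i = 1} ≤ b) (k) : walk j σ k < n := by
    have := walk_le_add_card (j := j) σ k
    omega
  let e : {f : Fin (N + 1) → ℕ // IsPathWHom (N + 1) n f ∧ (∀ h : 0 < N + 1, f ⟨0, h⟩ = j) ∧
        downSteps (N + 1) f ≤ a ∧ upSteps (N + 1) f ≤ b} ≃
      {σ : Fin N → SignType // #{i | σ i = -1} ≤ a ∧ #{i | σ i = 1} ≤ b} :=
    { toFun := fun f => ⟨stepSigns f.1, by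
        rw [← downSteps_eq_card_stepSigns f.2.1, ← upSteps_eq_card_stepSigns f.2.1]
        exact f.2.2.2⟩
      invFun := fun σ =>
        have hσ := isPathWHom_toNat_walk (hpos σ.1 σ.2.1) (hlt σ.1 σ.2.2)
        ⟨_, hσ, fun _ => by simp [walk_zero], by
          rw [downSteps_eq_card_stepSigns hσ, upSteps_eq_card_stepSigns hσ,
            stepSigns_toNat_walk (hpos σ.1 σ.2.1)]
          exact σ.2⟩
      left_inv := fun f => Subtype.ext <| funext fun k => by
        simp [walk_stepSigns f.2.1 (f.2.2.1 _) k]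
      right_inv := fun σ => Subtype.ext (stepSigns_toNat_walk (hpos σ.1 σ.2.1)) }
  rw [Nat.card_congr e, Nat.card_eq_fintype_card, Fintype.card_subtype]

end Walks

theorem whomCount_case3_general (m n j : ℕ)
    (hmn : m ≤ n) :
    (Nat.card {f : Fin m → ℕ //
        IsPathWHom m n f ∧ (∀ h : 0 < m, f ⟨0, h⟩ = j) ∧
        (downSteps m f : ℤ) ≤ (j : ℤ) - n + m ∧
        (upSteps m f : ℤ) ≤ (n : ℤ) - j - 1} : ℤ) =
      ∑ t ∈ Finset.Icc (0 : ℤ) ((j : ℤ) - n + m),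
        ∑ s ∈ Finset.Icc (0 : ℤ) ((n : ℤ) - j - 1),
          (multi3 ((m : ℤ) - 1) s t ((m : ℤ) - 1 - s - t) : ℤ) := by
  by_cases hdeg : (j : ℤ) - n + m < 0 ∨ (n : ℤ) - j - 1 < 0
  · have : IsEmpty {f : Fin m → ℕ // IsPathWHom m n f ∧ (∀ h : 0 < m, f ⟨0, h⟩ = j) ∧
        (downSteps m f : ℤ) ≤ (j : ℤ) - n + m ∧ (upSteps m f : ℤ) ≤ (n : ℤ) - j - 1} :=
      ⟨fun ⟨_, _, _, hd, hu⟩ => by omega⟩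
    rw [Nat.card_of_isEmpty, Nat.cast_zero]
    rcases hdeg with hdeg | hdeg <;> simp [Icc_eq_empty_of_lt hdeg]
  simp only [not_or, not_lt] at hdeg
  obtain ⟨a, ha⟩ : ∃ a : ℕ, (j : ℤ) - n + m = a := ⟨_, (Int.toNat_of_nonneg hdeg.1).symm⟩
  obtain ⟨b, hb⟩ : ∃ b : ℕ, (n : ℤ) - j - 1 = b := ⟨_, (Int.toNat_of_nonneg hdeg.2).symm⟩
  obtain ⟨N, rfl⟩ : ∃ N, m = N + 1 := ⟨m - 1, by omega⟩
  simp only [ha, hb, Nat.cast_le, sum_Icc_zero_natCast]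
  rw [card_pathWHom_eq_card_signs (by omega) (by omega), card_signs_le_eq_sum, Fintype.card_fin]
  push_cast
  refine sum_congr rfl fun t _ => sum_congr rfl fun s _ => ?_
  rw [add_sub_cancel_right, multi3_natCast, Nat.cast_mul]

/-- Case 3: for `m ≤ n`, `j < n`, the number of weak homomorphisms
`f : P_m → P_n` with `f(0) = j` whose number of down-steps is at most `j − n + m` and
whose number of up-steps is at most `n − j − 1` equals
`Σ_{t=0}^{j−n+m} Σ_{s=0}^{n−j−1} binom(m−1; s, t, m−1−s−t)`. -/
theorem whomCount_case3 (m n j : ℕ) (hm : 0 < m) (hn : 0 < n)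
    (hmn : m ≤ n) (hj : j < n) :
    (Nat.card {f : Fin m → ℕ //
        IsPathWHom m n f ∧ (∀ h : 0 < m, f ⟨0, h⟩ = j) ∧
        (downSteps m f : ℤ) ≤ (j : ℤ) - n + m ∧
        (upSteps m f : ℤ) ≤ (n : ℤ) - j - 1} : ℤ) =
      ∑ t ∈ Finset.Icc (0 : ℤ) ((j : ℤ) - n + m),
        ∑ s ∈ Finset.Icc (0 : ℤ) ((n : ℤ) - j - 1),
          (multi3 ((m : ℤ) - 1) s t ((m : ℤ) - 1 - s - t) : ℤ) :=
  whomCount_case3_general m n j hmn
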